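/- Suppose the procedure P is declared by P(ū)::S ∈ D. Then M[[P(t̄)]] = M[[begin local ū:=t̄; P(ū) end]]; that is, every procedure call has the same semantics as the block that assigns the actual parameters to the formal parameters and then performs the generic call P(ū). -/
import Mathlib


/-! Syntax -/

abbrev Var := ℕ
abbrev PName := ℕ

/-- Expressions: terms of a fixed first-order language. -/
inductive Expr : Type
  | var : Var → Expr
  | fn : ℕ → List Expr → Expr

/-- Assertions: formulas of the first-order language (with equality). -/
inductive Assertion : Type
  | tru : Assertion
  | eq : Expr → Expr → Assertion
  | rel : ℕ → List Expr → Assertion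
  | not : Assertion → Assertion
  | and : Assertion → Assertion → Assertion
  | ex : Var → Assertion → Assertion

/-- Implication, as a derived connective. -/
def Assertion.imp (p q : Assertion) : Assertion := .not (.and p (.not q))

/-- Statements. -/
inductive Stmt : Type
  | skip : Stmt
  | assign : List Var → List Expr → Stmt
  | call : PName → List Expr → Stmt
  | seq : Stmt → Stmt → Stmt
  | ifte : Assertion → Stmt → Stmt → Stmt
  | wh : Assertion → Stmt → Stmt
  | block : List Var → List Expr → Stmt → Stmt

/-- A set of procedure declarations `P(ū)::S`. -/
abbrev Decls := List (PName × List Var × Stmt)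

def lookupD (D : Decls) (P : PName) : Option (List Var × Stmt) :=
  (D.find? (fun d => d.1 == P)).map (·.2)

/-- Well-formedness: exactly one declaration per procedure name. -/
def Decls.Wf (D : Decls) : Prop := (D.map Prod.fst).Nodup

/-! Variables -/

def varsE : Expr → List Var
  | .var x => [x]
  | .fn _ ts => ts.attach.flatMap (fun t => varsE t.1)
decreasing_by
  have := List.sizeOf_lt_of_mem t.2
  simp only [Expr.fn.sizeOf_spec]
  omega

def varsEs (ts : List Expr) : List Var := ts.flatMap varsE

def varsA : Assertion → List Var
  | .tru => []
  | .eq a b => varsE a ++ varsE b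
  | .rel _ ts => varsEs ts
  | .not p => varsA p
  | .and p q => varsA p ++ varsA q
  | .ex x p => x :: varsA p

def freeA : Assertion → List Var
  | .tru => []
  | .eq a b => varsE a ++ varsE b
  | .rel _ ts => varsEs ts
  | .not p => freeA p
  | .and p q => freeA p ++ freeA q
  | .ex x p => (freeA p).filter (· != x)

def varsS : Stmt → List Var
  | .skip => []
  | .assign xs ts => xs ++ varsEs ts
  | .call _ ts => varsEs ts
  | .seq S₁ S₂ => varsS S₁ ++ varsS S₂
  | .ifte B S₁ S₂ => varsA B ++ varsS S₁ ++ varsS S₂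
  | .wh B S => varsA B ++ varsS S
  | .block xs ts S => xs ++ varsEs ts ++ varsS S

/-- Variables occurring in the declarations `D`. -/
def varsD (D : Decls) : List Var := D.flatMap (fun d => d.2.1 ++ varsS d.2.2)

/-- `var(D | S)`. -/
def varsProg (D : Decls) (S : Stmt) : List Var := varsS S ++ varsD D
/-! Semantics -/

/-- An interpretation of the first-order language. -/
structure Interp where
  Dom : Type
  nonempty : Nonempty Dom
  fn : ℕ → List Dom → Dom
  rel : ℕ → List Dom → Prop

/-- States over an interpretation. -/
abbrev Interp.State (I : Interp) := Var → I.Dom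

/-- Simultaneous update of a state at a list of (distinct) variables. -/
def updList {α : Type _} (σ : Var → α) : List Var → List α → Var → α
  | x :: xs, d :: ds => Function.update (updList σ xs ds) x d
  | _, _ => σ

/-- Value of an expression in a state. -/
def evalE (I : Interp) (σ : I.State) : Expr → I.Dom
  | .var x => σ x
  | .fn f ts => I.fn f (ts.attach.map (fun t => evalE I σ t.1))
decreasing_by
  have := List.sizeOf_lt_of_mem t.2
  simp only [Expr.fn.sizeOf_spec]
  omega

def evalEs (I : Interp) (σ : I.State) (ts : List Expr) : List I.Dom :=
  ts.map (evalE I σ)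

/-- Truth of an assertion in a state. -/
def satA (I : Interp) (σ : I.State) : Assertion → Prop
  | .tru => True
  | .eq a b => evalE I σ a = evalE I σ b
  | .rel r ts => I.rel r (evalEs I σ ts)
  | .not p => ¬ satA I σ p
  | .and p q => satA I σ p ∧ satA I σ q
  | .ex x p => ∃ d : I.Dom, satA I (Function.update σ x d) p

/-- `[[p]]_I`, the meaning of an assertion. -/
def meaning (I : Interp) (p : Assertion) : Set I.State := {σ | satA I σ p}

/-- An assertion true in `I` (in all states). -/
def valid (I : Interp) (p : Assertion) : Prop := ∀ σ : I.State, satA I σ p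

/-- Big-step (input/output) semantics of statements w.r.t. declarations `D`;
procifedure calls are interpreted by inlining (call-by-value) and blocks restore
the initial values of their local variables. -/
inductive BigStep (D : Decls) (I : Interp) : Stmt → I.State → I.State → Prop
  | skip {σ} : BigStep D I .skip σ σ
  | assign {xs ts σ} : BigStep D I (.assign xs ts) σ (updList σ xs (evalEs I σ ts))
  | seq {S₁ S₂ σ τ ρ} : BigStep D I S₁ σ τ → BigStep D I S₂ τ ρ →
      BigStep D I (.seq S₁ S₂) σ ρ
  | ifteT {B S₁ S₂ σ τ} : satA I σ B → BigStep D I S₁ σ τ →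
      BigStep D I (.ifte B S₁ S₂) σ τ
  | ifteF {B S₁ S₂ σ τ} : ¬ satA I σ B → BigStep D I S₂ σ τ →
      BigStep D I (.ifte B S₁ S₂) σ τ
  | whT {B S σ τ ρ} : satA I σ B → BigStep D I S σ τ → BigStep D I (.wh B S) τ ρ →
      BigStep D I (.wh B S) σ ρ
  | whF {B S σ} : ¬ satA I σ B → BigStep D I (.wh B S) σ σ
  | block {xs ts S σ τ} : BigStep D I (.seq (.assign xs ts) S) σ τ →
      BigStep D I (.block xs ts S) σ (updList τ xs (xs.map σ))
  | call {P us S ts σ τ} : lookupD D P = some (us, S) →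
      BigStep D I (.block us ts S) σ τ → BigStep D I (.call P ts) σ τ

/-- `M[[S]]`, the meaning of a statement: the set of final states. -/
def Sem (D : Decls) (I : Interp) (S : Stmt) (σ : I.State) : Set I.State :=
  {τ | BigStep D I S σ τ}

/-- `I ⊨ {p} S {q}`: partial correctness. -/
def HoareValid (D : Decls) (I : Interp) (p : Assertion) (S : Stmt) (q : Assertion) : Prop :=
  ∀ σ τ : I.State, satA I σ p → BigStep D I S σ τ → satA I τ q

/-! `change(D | S)` -/

/-- `change(∅ | S)` (calls contribute nothing). -/
def chgNo : Stmt → List Var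
  | .skip => []
  | .assign xs _ => xs
  | .call _ _ => []
  | .seq S₁ S₂ => chgNo S₁ ++ chgNo S₂
  | .ifte _ S₁ S₂ => chgNo S₁ ++ chgNo S₂
  | .wh _ S => chgNo S
  | .block xs _ S => (chgNo S).filter (fun x => !(xs.contains x))

/-- `change(D)`: union of `change(∅ | body)` over the declarations in `D`. -/
def changeD (D : Decls) : List Var := D.flatMap (fun d => chgNo d.2.2)

/-- `change(D | S)`. -/
def chg (D : Decls) : Stmt → List Var
  | .skip => []
  | .assign xs _ => xs
  | .call P _ =>
      match lookupD D P with
      | some (us, _) => (changeD D).filter (fun x => !(us.contains x))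
      | none => []
  | .seq S₁ S₂ => chg D S₁ ++ chg D S₂
  | .ifte _ S₁ S₂ => chg D S₁ ++ chg D S₂
  | .wh _ S => chg D S
  | .block xs _ S => (chg D S).filter (fun x => !(xs.contains x))
/-! Substitution -/

/-- The simultaneous substitution map `[x̄ := t̄]`. -/
def subMap (xs : List Var) (ts : List Expr) : Var → Option Expr :=
  fun y => ((xs.zip ts).find? (fun p => p.1 == y)).map (·.2)

def substE (m : Var → Option Expr) : Expr → Expr
  | .var x => (m x).getD (.var x)
  | .fn f ts => .fn f (ts.attach.map (fun t => substE m t.1))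
decreasing_by
  have := List.sizeOf_lt_of_mem t.2
  simp only [Expr.fn.sizeOf_spec]
  omega

def substA (m : Var → Option Expr) : Assertion → Assertion
  | .tru => .tru
  | .eq a b => .eq (substE m a) (substE m b)
  | .rel r ts => .rel r (ts.map (substE m))
  | .not p => .not (substA m p)
  | .and p q => .and (substA m p) (substA m q)
  | .ex x p => .ex x (substA (fun y => if y = x then none else m y) p)

/-- `p[x̄ := t̄]`. -/
def substList (p : Assertion) (xs : List Var) (ts : List Expr) : Assertion :=
  substA (subMap xs ts) p

/-- `∃ x̄ : p`. -/
def exList (xs : List Var) (p : Assertion) : Assertion := xs.foldr .ex p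

/-- The assertion `x̄ = z̄` for two lists of variables. -/
def eqVars (xs zs : List Var) : Assertion :=
  ((xs.zip zs).map (fun c => Assertion.eq (.var c.1) (.var c.2))).foldr .and .tru

/-- The assertion `t̄ = v̄` for a list of expressions and a list of variables. -/
def eqExprVars (ts : List Expr) (vs : List Var) : Assertion :=
  ((ts.zip vs).map (fun c => Assertion.eq c.1 (.var c.2))).foldr .and .tru

/-! Proof systems -/

abbrev Triple := Assertion × Stmt × Assertion

/-- Flags selecting the procedure-call related rules of the proof system. -/
structure PSys where
  hasPCall : Bool   -- the PROCEDURE CALL rule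
  hasRecG : Bool    -- the RECURSION rule (generic calls)
  hasRecII : Bool   -- the RECURSION II rule (of ABO)

def PSys.ABO : PSys := ⟨false, false, true⟩
def PSys.ABO1 : PSys := ⟨true, false, true⟩
def PSys.CBV : PSys := ⟨true, true, false⟩

/-- All procedure calls occurring in a statement. -/
def callsS : Stmt → List (PName × List Expr)
  | .skip => []
  | .assign _ _ => []
  | .call P ts => [(P, ts)]
  | .seq S₁ S₂ => callsS S₁ ++ callsS S₂
  | .ifte _ S₁ S₂ => callsS S₁ ++ callsS S₂
  | .wh _ S => callsS S
  | .block _ _ S => callsS S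

/-- All procedure calls occurring in the program `(D | S)`. -/
def callsProg (D : Decls) (S : Stmt) : List (PName × List Expr) :=
  callsS S ++ D.flatMap (fun d => callsS d.2.2)

/-- The generic call `P(ū)` of the `i`-th declaration of `D`. -/
def genCall (D : Decls) (i : Fin D.length) : Stmt :=
  .call (D.get i).1 (((D.get i).2.1).map Expr.var)

/-- The assumption set `{p₁}P₁(ū₁){q₁}, …, {pₙ}Pₙ(ūₙ){qₙ}` of generic calls. -/
def genSet (D : Decls) (pre post : Fin D.length → Assertion) : Set Triple :=
  Set.range (fun i : Fin D.length => (pre i, genCall D i, post i))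

/-- The assumption set of the RECURSION II rule. -/
def asmSet (cs : List ((PName × List Expr) × Assertion × Assertion)) : Set Triple :=
  {t | ∃ c ∈ cs, t = (c.2.1, Stmt.call c.1.1 c.1.2, c.2.2)}

/-- `HoareN sys D I Φ n p S q`: the correctness formula `{p}S{q}` is derivable in
the proof system selected by `sys` from the set `Φ` of assumptions and the
assertions true in `I`, using at most `n` applications of axioms and proof rules. -/
inductive HoareN (sys : PSys) (D : Decls) (I : Interp) :
    Set Triple → ℕ → Assertion → Stmt → Assertion → Prop
  | asm {Φ p S q} : (p, S, q) ∈ Φ → HoareN sys D I Φ 0 p S q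
  | skip {Φ p} : HoareN sys D I Φ 1 p .skip p
  | assign {Φ p xs ts} :
      HoareN sys D I Φ 1 (substList p xs ts) (.assign xs ts) p
  | seq {Φ k₁ k₂ p r q S₁ S₂} :
      HoareN sys D I Φ k₁ p S₁ r → HoareN sys D I Φ k₂ r S₂ q →
      HoareN sys D I Φ (k₁ + k₂ + 1) p (.seq S₁ S₂) q
  | ifte {Φ k₁ k₂ p q B S₁ S₂} :
      HoareN sys D I Φ k₁ (.and p B) S₁ q → HoareN sys D I Φ k₂ (.and p (.not B)) S₂ q →
      HoareN sys D I Φ (k₁ + k₂ + 1) p (.ifte B S₁ S₂) q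
  | wh {Φ k p B S} :
      HoareN sys D I Φ k (.and p B) S p →
      HoareN sys D I Φ (k + 1) p (.wh B S) (.and p (.not B))
  | conseq {Φ k p p₁ q₁ q S} :
      valid I (p.imp p₁) → HoareN sys D I Φ k p₁ S q₁ → valid I (q₁.imp q) →
      HoareN sys D I Φ (k + 1) p S q
  | block {Φ k p q xs ts S} :
      (∀ x ∈ xs, x ∉ freeA q) →
      HoareN sys D I Φ k p (.seq (.assign xs ts) S) q →
      HoareN sys D I Φ (k + 1) p (.block xs ts S) q
  | subst {Φ k p q S} {xs ys : List Var} :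
      xs.Nodup → xs.length = ys.length →
      (∀ x ∈ xs, x ∉ varsProg D S) → (∀ y ∈ ys, y ∉ chg D S) →
      HoareN sys D I Φ k p S q →
      HoareN sys D I Φ (k + 1) (substList p xs (ys.map .var)) S (substList q xs (ys.map .var))
  | inv {Φ k p r q S} :
      (∀ x ∈ freeA p, x ∉ chg D S) →
      HoareN sys D I Φ k r S q →
      HoareN sys D I Φ (k + 1) (.and p r) S (.and p q)
  | exI {Φ k p q S xs} :
      (∀ x ∈ xs, x ∉ varsProg D S ∧ x ∉ freeA q) →
      HoareN sys D I Φ k p S q →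
      HoareN sys D I Φ (k + 1) (exList xs p) S q
  | pcall {Φ k p q P us S ts} :
      sys.hasPCall = true →
      lookupD D P = some (us, S) → ts.length = us.length →
      (∀ u ∈ us, u ∉ freeA q) →
      HoareN sys D I Φ k p (.call P (us.map .var)) q →
      HoareN sys D I Φ (k + 1) (substList p us ts) (.call P ts) q
  | recG {Φ p S q k} (pre post : Fin D.length → Assertion) (cnt : Fin D.length → ℕ) :
      sys.hasRecG = true →
      (∀ i : Fin D.length, ∀ u ∈ (D.get i).2.1, u ∉ freeA (post i)) →
      HoareN sys D I (genSet D pre post) k p S q →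
      (∀ i : Fin D.length,
        HoareN sys D I (genSet D pre post) (cnt i) (pre i) (D.get i).2.2 (post i)) →
      HoareN sys D I Φ (k + (∑ i, cnt i) + 1) p S q
  | recII {Φ p S q k} (cs : List ((PName × List Expr) × Assertion × Assertion))
      (cnt : Fin cs.length → ℕ)
      (usf : Fin cs.length → List Var) (Bf : Fin cs.length → Stmt) :
      sys.hasRecII = true →
      (∀ c, c ∈ cs.map Prod.fst ↔ c ∈ callsProg D S) →
      (∀ i : Fin cs.length, lookupD D (cs.get i).1.1 = some (usf i, Bf i)) →
      HoareN sys D I (asmSet cs) k p S q →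
      (∀ i : Fin cs.length,
        HoareN sys D I (asmSet cs) (cnt i)
          (cs.get i).2.1 (.block (usf i) (cs.get i).1.2 (Bf i)) (cs.get i).2.2) →
      HoareN sys D I Φ (k + (∑ i, cnt i) + 1) p S q

/-- `Φ ⊢_{sys,I} {p}S{q}`. -/
def Derivable (sys : PSys) (D : Decls) (I : Interp) (Φ : Set Triple)
    (p : Assertion) (S : Stmt) (q : Assertion) : Prop :=
  ∃ n, HoareN sys D I Φ n p S q
/-! Strongest postconditions and expressiveness -/

/-- `r` defines the strongest postcondition `sp_I(p, S)` in `I`. -/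
def DefinesSP (I : Interp) (D : Decls) (r p : Assertion) (S : Stmt) : Prop :=
  ∀ τ : I.State, satA I τ r ↔ ∃ σ : I.State, satA I σ p ∧ BigStep D I S σ τ

/-- The language is expressive relative to `I` (for the declarations `D`). -/
def Expressive (I : Interp) (D : Decls) : Prop :=
  ∀ (p : Assertion) (S : Stmt), ∃ r : Assertion, DefinesSP I D r p S

/-- `t` is a most general correctness specification for the procedure `P(ū)::S`:
`{x̄=z̄ ∧ ū=v̄} P(ū) {∃ū: SP_I(x̄=z̄ ∧ ū=v̄, S)}`, where `{x̄} = change(D)\{ū}` and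
`v̄, z̄` are lists of fresh variables of the same lengths as `ū` and `x̄`. -/
def IsMGCS (I : Interp) (D : Decls) (P : PName) (us : List Var) (S : Stmt)
    (t : Triple) : Prop :=
  ∃ (xs vs zs : List Var) (SP : Assertion),
    xs.Nodup ∧ (∀ x, x ∈ xs ↔ (x ∈ changeD D ∧ x ∉ us)) ∧
    vs.length = us.length ∧ zs.length = xs.length ∧
    (vs ++ zs).Nodup ∧
    (∀ v ∈ vs ++ zs, v ∉ varsD D ∧ v ∉ us ∧ v ∉ xs) ∧
    DefinesSP I D SP (.and (eqVars xs zs) (eqVars us vs)) S ∧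
    t = (.and (eqVars xs zs) (eqVars us vs),
         Stmt.call P (us.map Expr.var),
         exList us SP)

/-! Sizes of programs and bound on the length of proofs -/

def lS : Stmt → ℕ
  | .skip => 1
  | .assign _ _ => 1
  | .call _ _ => 1
  | .seq S₁ S₂ => lS S₁ + lS S₂ + 1
  | .ifte _ S₁ S₂ => lS S₁ + lS S₂ + 1
  | .wh _ S => lS S + 1
  | .block _ _ S => (1 + lS S + 1) + 1

def lD (D : Decls) : ℕ := (D.map (fun d => lS d.2.2)).sum

/-- `l(D | S)`. -/
def lProg (D : Decls) (S : Stmt) : ℕ := lD D + lS S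

/-- Number of parallel assignments occurring in `S`
(the initialization of a block counts as a parallel assignment). -/
def na : Stmt → ℕ
  | .skip => 0
  | .assign _ _ => 1
  | .call _ _ => 0
  | .seq S₁ S₂ => na S₁ + na S₂
  | .ifte _ S₁ S₂ => na S₁ + na S₂
  | .wh _ S => na S
  | .block _ _ S => na S + 1

/-- Number of block statements occurring in `S`. -/
def nb : Stmt → ℕ
  | .skip => 0
  | .assign _ _ => 0
  | .call _ _ => 0
  | .seq S₁ S₂ => nb S₁ + nb S₂
  | .ifte _ S₁ S₂ => nb S₁ + nb S₂
  | .wh _ S => nb S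
  | .block _ _ S => nb S + 1

/-- Number of procedure calls occurring in `S`. -/
def np : Stmt → ℕ
  | .skip => 0
  | .assign _ _ => 0
  | .call _ _ => 1
  | .seq S₁ S₂ => np S₁ + np S₂
  | .ifte _ S₁ S₂ => np S₁ + np S₂
  | .wh _ S => np S
  | .block _ _ S => np S

/-- Number of while loops occurring in `S`. -/
def nw : Stmt → ℕ
  | .skip => 0
  | .assign _ _ => 0
  | .call _ _ => 0
  | .seq S₁ S₂ => nw S₁ + nw S₂
  | .ifte _ S₁ S₂ => nw S₁ + nw S₂
  | .wh _ S => nw S + 1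
  | .block _ _ S => nw S

/-- `m(S) = l(S) + n_a(S) + 3·n_b(S) + 6·n_p(S) + n_w(S)`. -/
def mSize (S : Stmt) : ℕ := lS S + na S + 3 * nb S + 6 * np S + nw S

/-! Local and global occurrences, clash-freeness -/

/-- Variables having a local occurrence in a statement. -/
def localsS : Stmt → List Var
  | .skip => []
  | .assign _ _ => []
  | .call _ _ => []
  | .seq S₁ S₂ => localsS S₁ ++ localsS S₂
  | .ifte _ S₁ S₂ => localsS S₁ ++ localsS S₂
  | .wh _ S => localsS S
  | .block xs _ S => xs ++ varsS S

/-- Variables having a local occurrence in the program `(D | S)`. -/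
def localsProg (D : Decls) (S : Stmt) : List Var :=
  localsS S ++ D.flatMap (fun d => d.2.1 ++ localsS d.2.2)

/-- Variables having a global occurrence in a statement. -/
def globalsS : Stmt → List Var
  | .skip => []
  | .assign xs ts => xs ++ varsEs ts
  | .call _ ts => varsEs ts
  | .seq S₁ S₂ => globalsS S₁ ++ globalsS S₂
  | .ifte B S₁ S₂ => varsA B ++ globalsS S₁ ++ globalsS S₂
  | .wh B S => varsA B ++ globalsS S
  | .block _ ts _ => varsEs ts

/-- A program is clash-free if no variable has both a local occurrence in it and
a global occurrence in a procedure body. -/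
def ClashFree (D : Decls) (S : Stmt) : Prop :=
  ∀ x ∈ localsProg D S, ∀ d ∈ D, x ∉ globalsS d.2.2

/-- `Repl P ts B S₁ S₂`: `S₂` results from `S₁` by replacing one occurrence of
the procedure call `P(t̄)` by the statement `B`. -/
inductive Repl (P : PName) (ts : List Expr) (B : Stmt) : Stmt → Stmt → Prop
  | here : Repl P ts B (.call P ts) B
  | seqL {S₁ S₁' S₂} : Repl P ts B S₁ S₁' → Repl P ts B (.seq S₁ S₂) (.seq S₁' S₂)
  | seqR {S₁ S₂ S₂'} : Repl P ts B S₂ S₂' → Repl P ts B (.seq S₁ S₂) (.seq S₁ S₂')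
  | ifteL {C S₁ S₁' S₂} : Repl P ts B S₁ S₁' → Repl P ts B (.ifte C S₁ S₂) (.ifte C S₁' S₂)
  | ifteR {C S₁ S₂ S₂'} : Repl P ts B S₂ S₂' → Repl P ts B (.ifte C S₁ S₂) (.ifte C S₁ S₂')
  | wh {C S S'} : Repl P ts B S S' → Repl P ts B (.wh C S) (.wh C S')
  | block {xs es S S'} : Repl P ts B S S' → Repl P ts B (.block xs es S) (.block xs es S')

/-! Purity -/

/-- All procedure calls in `S` are generic. -/
def PureS (D : Decls) : Stmt → Prop
  | .skip => True
  | .assign _ _ => True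
  | .call P ts => ∃ us B, lookupD D P = some (us, B) ∧ ts = us.map Expr.var
  | .seq S₁ S₂ => PureS D S₁ ∧ PureS D S₂
  | .ifte _ S₁ S₂ => PureS D S₁ ∧ PureS D S₂
  | .wh _ S => PureS D S
  | .block _ _ S => PureS D S

/-- The program `(D | S)` is pure: all procedure calls occurring in it are generic. -/
def PureProg (D : Decls) (S : Stmt) : Prop :=
  PureS D S ∧ ∀ d ∈ D, PureS D d.2.2

/-! Equality of states and sets of states modulo a set of variables -/

/-- `σ = τ mod Z`. -/
def eqMod {α : Type _} (Z : List Var) (σ τ : Var → α) : Prop :=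
  ∀ x, x ∉ Z → σ x = τ x

/-- `X = Y mod Z`, for sets of states. -/
def setEqMod {α : Type _} (Z : List Var) (X Y : Set (Var → α)) : Prop :=
  (∀ σ ∈ X, ∃ τ ∈ Y, eqMod Z σ τ) ∧ (∀ τ ∈ Y, ∃ σ ∈ X, eqMod Z σ τ)


theorem updList_notMem {α : Type _} (σ : Var → α) (xs : List Var) (ds : List α)
    (y : Var) (h : y ∉ xs) : updList σ xs ds y = σ y := by
  induction xs generalizing ds with
  | nil => cases ds <;> rfl
  | cons x xs ih =>
    cases ds with
    | nil => rfl
    | cons d ds =>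
      simp only [updList]
      rw [Function.update_of_ne (by simp at h; tauto)]
      exact ih ds (by simp at h; tauto)

theorem updList_map_self {α : Type _} (σ : Var → α) (xs : List Var) :
    updList σ xs (xs.map σ) = σ := by
  induction xs with
  | nil => rfl
  | cons x xs ih =>
    simp only [List.map_cons, updList, ih, Function.update_eq_self]

theorem updList_mem_eq {α : Type _} (σ τ : Var → α) (xs : List Var) (ds : List α)
    (hlen : xs.length ≤ ds.length) (y : Var) (hy : y ∈ xs) :
    updList σ xs ds y = updList τ xs ds y := by
  induction xs generalizing ds with
  | nil => simp at hy
  | cons x xs ih =>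
    cases ds with
    | nil => simp at hlen
    | cons d ds =>
      by_cases h : y = x
      · subst h; simp [updList]
      · simp only [updList]
        rw [Function.update_of_ne h, Function.update_of_ne h]
        refine ih ds (by simpa using hlen) ?_
        rcases List.mem_cons.1 hy with h' | h'
        · exact absurd h' h
        · exact h'

theorem updList_updList {α : Type _} (σ : Var → α) (xs : List Var) (as ds : List α)
    (hlen : xs.length ≤ ds.length) :
    updList (updList σ xs as) xs ds = updList σ xs ds := by
  funext y
  by_cases h : y ∈ xs
  · exact updList_mem_eq _ _ _ _ hlen y h
  · rw [updList_notMem _ _ _ _ h, updList_notMem _ _ _ _ h, updList_notMem _ _ _ _ h]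

theorem evalEs_map_var (I : Interp) (σ : I.State) (us : List Var) :
    evalEs I σ (us.map Expr.var) = us.map σ := by
  simp [evalEs, List.map_map, Function.comp]
  intro x _; simp [evalE]

/-- every procedure call has the same semantics as the block that
assigns the actual parameters to the formals and then performs the generic call. -/
theorem call_as_generic_block (D : Decls) (I : Interp)
    (P : PName) (us : List Var) (S : Stmt) (ts : List Expr)
    (hP : lookupD D P = some (us, S)) (hus : us.Nodup)
    (hlen : ts.length = us.length) :
    Sem D I (.call P ts) = Sem D I (.block us ts (.call P (us.map .var))) := by
  have hself : ∀ σ : I.State, updList σ us (evalEs I σ (us.map Expr.var)) = σ := by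
    intro σ; rw [evalEs_map_var]; exact updList_map_self σ us
  funext σ
  ext τ
  constructor
  · rintro hc
    rcases hc with _ | _ | _ | _ | _ | _ | _ | _ | ⟨hP', hb⟩
    rw [hP] at hP'; injection hP' with hP''
    injection hP'' with h1 h2; subst h1; subst h2
    rcases hb with _ | _ | _ | _ | _ | _ | _ | ⟨hseq⟩
    rcases hseq with _ | _ | ⟨h1, h2⟩
    rcases h1 with _ | _
    -- h2 : BigStep D I S (updList σ us (evalEs I σ ts)) τ0
    set σ1 := updList σ us (evalEs I σ ts) with hσ1
    have ha : BigStep D I (.assign us (us.map Expr.var)) σ1 σ1 := by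
      have := BigStep.assign (D := D) (I := I) (xs := us) (ts := us.map Expr.var) (σ := σ1)
      rwa [hself σ1] at this
    have hcall : BigStep D I (.call P (us.map Expr.var)) σ1
        (updList _ us (us.map σ1)) :=
      BigStep.call hP (BigStep.block (BigStep.seq ha h2))
    have hblk := BigStep.block (I := I) (D := D)
      (BigStep.seq (BigStep.assign (xs := us) (ts := ts)) hcall)
    rw [updList_updList _ _ _ _ (by simp)] at hblk
    exact hblk
  · rintro hb
    rcases hb with _ | _ | _ | _ | _ | _ | _ | ⟨hseq⟩
    rcases hseq with _ | _ | ⟨h1, hc⟩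
    rcases h1 with _ | _
    set σ1 := updList σ us (evalEs I σ ts) with hσ1
    rcases hc with _ | _ | _ | _ | _ | _ | _ | _ | ⟨hP', hb'⟩
    rw [hP] at hP'; injection hP' with hP''
    injection hP'' with h1 h2; subst h1; subst h2
    rcases hb' with _ | _ | _ | _ | _ | _ | _ | ⟨hseq'⟩
    rcases hseq' with _ | _ | ⟨h1', h2'⟩
    rcases h1' with _ | _
    rw [hself σ1] at h2'
    rw [updList_updList _ _ _ _ (by simp)]
    exact BigStep.call hP (BigStep.block (BigStep.seq BigStep.assign h2'))
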